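/- arXiv:2509.02179 — 2 statements merged into one kernel-verified Lean document; each statement's English description precedes it below -/
import Mathlib

section
/- Let ≈ be a substring consistent equivalence relation on strings, let T be a string of length n, and define LPF[i] = max{ℓ ≥ 0 : T[i..i+ℓ) ≈ T[j..j+ℓ) for some j ∈ [1..i)} (with LPF[1] = 0). Then LPF[i+1] ≥ LPF[i] − 1 for all i ∈ [1..n). -/
/-- The substring X[i..i+len) for a 1-indexed position i. -/
def seg (X : List ℤ) (i len : ℕ) : List ℤ := (X.drop (i - 1)).take len

/-- for a substring consistent equivalence relation,
the longest previous factor array satisfies LPF[i+1] ≥ LPF[i] − 1. -/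
theorem LPF_one_sided_lipschitz
    (approx : List ℤ → List ℤ → Prop)
    (hequiv : Equivalence approx)
    (hlen : ∀ X Y, approx X Y → X.length = Y.length)
    (hsub : ∀ X Y, approx X Y → ∀ i j, 1 ≤ i → i ≤ j → j ≤ X.length →
      approx (seg X i (j - i + 1)) (seg Y i (j - i + 1)))
    (T : List ℤ) (n : ℕ) (hT : T.length = n)
    (LPF : ℕ → ℕ)
    (hLPF : ∀ i, LPF i = sSup {ℓ : ℕ | ℓ = 0 ∨
      ∃ j, 1 ≤ j ∧ j < i ∧ j + ℓ ≤ n + 1 ∧ i + ℓ ≤ n + 1 ∧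
        approx (seg T i ℓ) (seg T j ℓ)}) :
    ∀ i, 1 ≤ i → i < n → LPF i - 1 ≤ LPF (i + 1) := by
  intro i h1 hin
  have bdd : ∀ k, BddAbove {ℓ : ℕ | ℓ = 0 ∨
      ∃ j, 1 ≤ j ∧ j < k ∧ j + ℓ ≤ n + 1 ∧ k + ℓ ≤ n + 1 ∧
        approx (seg T k ℓ) (seg T j ℓ)} := by
    intro k
    refine ⟨n + 1, ?_⟩
    rintro ℓ (rfl | ⟨j, _, _, _, hk, _⟩)
    · exact Nat.zero_le _
    · omega
  have hmem : LPF i ∈ {ℓ : ℕ | ℓ = 0 ∨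
      ∃ j, 1 ≤ j ∧ j < i ∧ j + ℓ ≤ n + 1 ∧ i + ℓ ≤ n + 1 ∧
        approx (seg T i ℓ) (seg T j ℓ)} := by
    rw [hLPF i]
    exact Nat.sSup_mem ⟨0, Or.inl rfl⟩ (bdd i)
  rcases hmem with h0 | ⟨j, hj1, hji, hjl, hil, happ⟩
  · simp [h0]
  · set ℓ := LPF i with hℓ
    rcases Nat.lt_or_ge ℓ 2 with h2 | h2
    · omega
    · have hlen1 : (seg T i ℓ).length = ℓ := by
        simp [seg, List.length_take, List.length_drop]; omega
      have key := hsub _ _ happ 2 ℓ (by omega) h2 hlen1.ge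
      have e1 : ∀ k, 1 ≤ k → seg (seg T k ℓ) 2 (ℓ - 2 + 1) = seg T (k + 1) (ℓ - 1) := by
        intro k hk
        simp only [seg]
        rw [List.drop_take, List.take_take, List.drop_drop]
        congr 1
        · omega
        · congr 1; omega
      rw [e1 i h1, e1 j hj1] at key
      have hmem2 : ℓ - 1 ∈ {ℓ' : ℕ | ℓ' = 0 ∨
          ∃ j, 1 ≤ j ∧ j < i + 1 ∧ j + ℓ' ≤ n + 1 ∧ (i + 1) + ℓ' ≤ n + 1 ∧
            approx (seg T (i + 1) ℓ') (seg T j ℓ')} := by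
        exact Or.inr ⟨j + 1, by omega, by omega, by omega, by omega, key⟩
      rw [hLPF (i + 1)]
      exact le_csSup (bdd (i + 1)) hmem2
end

section
/- Let S₁, …, S_n be strings such that |S_i| = n − i + 1, no S_i is a prefix of another S_j, and whenever S_i and S_j have a common prefix of length ℓ > 0 then S_{i+1} and S_{j+1} have a common prefix of length at least ℓ − 1 (a quasi-suffix collection). Then for any substring consistent equivalence relation ≈ with encoding function E on a string T of length n, the collection S_i = Code(T[i..n])·#, where Code(X) = E(X[1]) E(X[1..2]) ⋯ E(X) and # is a fresh end-marker, is a quasi-suffix collection of n+1 strings (including S_{n+1} = #). -/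
/-- `Code(X)`: the encodings of the nonempty prefixes of `X`. -/
def code (E : List ℤ → ℤ) (X : List ℤ) : List ℤ :=
  (List.range X.length).map fun t => E (X.take (t + 1))

/-- `Code(T[i..n])·#`, with `none` as the end-marker `#`. -/
def codeSuffix (E : List ℤ → ℤ) (T : List ℤ) (n i : ℕ) : List (Option ℤ) :=
  ((List.range (n + 1 - i)).map fun t => some (E (seg T i (t + 1)))) ++ [none]

lemma length_seg {T : List ℤ} {n i ℓ : ℕ} (hT : T.length = n) (hi : 1 ≤ i)
    (hℓ : i + ℓ ≤ n + 1) : (seg T i ℓ).length = ℓ := by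
  simp only [seg, List.length_take, List.length_drop, hT]
  omega

lemma take_seg (T : List ℤ) {i ℓ m : ℕ} (hm : m ≤ ℓ) :
    (seg T i ℓ).take m = seg T i m := by
  simp [seg, List.take_take, min_eq_left hm]

lemma seg_seg_two (T : List ℤ) {i : ℕ} (hi : 1 ≤ i) (ℓ : ℕ) :
    seg (seg T i ℓ) 2 (ℓ - 1) = seg T (i + 1) (ℓ - 1) := by
  simp only [seg, List.drop_take, List.take_take, List.drop_drop, min_self]
  rw [show i - 1 + (2 - 1) = i + 1 - 1 by omega]

lemma approx_iff_code_eq {approx : List ℤ → List ℤ → Prop} {E : List ℤ → ℤ}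
    (hE : ∀ X Y, approx X Y ↔ (X.length = Y.length ∧
      ∀ i, 1 ≤ i → i ≤ X.length → E (X.take i) = E (Y.take i)))
    (X Y : List ℤ) : approx X Y ↔ code E X = code E Y := by
  rw [hE]
  constructor
  · rintro ⟨hlen, hpre⟩
    rw [code, code, ← hlen]
    refine List.map_congr_left fun t ht => hpre (t + 1) (by omega) ?_
    rw [List.mem_range] at ht
    omega
  · intro hcode
    have hlen : X.length = Y.length := by simpa [code] using congrArg List.length hcode
    refine ⟨hlen, fun i hi hiX => ?_⟩
    have hentry := congrArg (·[i - 1]?) hcode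
    simp only [code, List.getElem?_map, List.getElem?_range (show i - 1 < X.length by omega),
      List.getElem?_range (show i - 1 < Y.length by omega), Option.map_some,
      Option.some.injEq, show i - 1 + 1 = i by omega] at hentry
    exact hentry

section codeSuffix

variable (E : List ℤ → ℤ) (T : List ℤ) (n : ℕ)

lemma length_codeSuffix (i : ℕ) : (codeSuffix E T n i).length = n + 1 - i + 1 := by
  simp [codeSuffix]

lemma getElem?_codeSuffix_of_lt {i m : ℕ} (hm : m < n + 1 - i) :
    (codeSuffix E T n i)[m]? = some (some (E (seg T i (m + 1)))) := by
  rw [codeSuffix, List.getElem?_append_left (by simpa using hm)]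
  simp [List.getElem?_range hm]

lemma getElem?_codeSuffix_endMarker (i : ℕ) : (codeSuffix E T n i)[n + 1 - i]? = some none := by
  simp [codeSuffix]

variable {E T n}

lemma take_codeSuffix (hT : T.length = n) {i ℓ : ℕ} (hi : 1 ≤ i) (hℓ : i + ℓ ≤ n + 1) :
    (codeSuffix E T n i).take ℓ = (code E (seg T i ℓ)).map some := by
  rw [codeSuffix,
    List.take_append_of_le_length (by rw [List.length_map, List.length_range]; omega),
    ← List.map_take, List.take_range, min_eq_left (by omega), code, length_seg hT hi hℓ,
    List.map_map]
  refine List.map_congr_left fun t ht => ?_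
  rw [List.mem_range] at ht
  rw [Function.comp_apply, take_seg T ht]

-- `n + 1 - b` is the position of the end-marker in `codeSuffix E T n b`.
lemma le_of_take_codeSuffix_eq {a b ℓ : ℕ} (hab : a < b) (hb : b ≤ n + 1)
    (h : (codeSuffix E T n a).take ℓ = (codeSuffix E T n b).take ℓ) : ℓ ≤ n + 1 - b := by
  by_contra! hℓ
  have hentry := congrArg (·[n + 1 - b]?) h
  simp only [List.getElem?_take, if_pos hℓ, getElem?_codeSuffix_endMarker,
    getElem?_codeSuffix_of_lt E T n (show n + 1 - b < n + 1 - a by omega)] at hentry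
  simp at hentry

lemma eq_of_codeSuffix_prefix {i j : ℕ} (hi : i ≤ n + 1) (hj : j ≤ n + 1)
    (h : codeSuffix E T n i <+: codeSuffix E T n j) : i = j := by
  by_contra hij
  have hji : j < i := by
    have := h.length_le
    rw [length_codeSuffix, length_codeSuffix] at this
    omega
  have hℓ := le_of_take_codeSuffix_eq hji hi
    ((List.prefix_iff_eq_take.mp h).symm.trans (List.take_length).symm)
  rw [length_codeSuffix] at hℓ
  omega

lemma take_codeSuffix_eq_iff_approx {approx : List ℤ → List ℤ → Prop}
    (hE : ∀ X Y, approx X Y ↔ (X.length = Y.length ∧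
      ∀ i, 1 ≤ i → i ≤ X.length → E (X.take i) = E (Y.take i)))
    (hT : T.length = n) {a b ℓ : ℕ} (ha : 1 ≤ a) (hb : 1 ≤ b)
    (hℓa : a + ℓ ≤ n + 1) (hℓb : b + ℓ ≤ n + 1) :
    (codeSuffix E T n a).take ℓ = (codeSuffix E T n b).take ℓ ↔
      approx (seg T a ℓ) (seg T b ℓ) := by
  rw [take_codeSuffix hT ha hℓa, take_codeSuffix hT hb hℓb,
    List.map_inj_right fun _ _ => Option.some.inj, approx_iff_code_eq hE]

lemma take_codeSuffix_succ_eq {approx : List ℤ → List ℤ → Prop}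
    (hsub : ∀ X Y, approx X Y → ∀ i j, 1 ≤ i → i ≤ j → j ≤ X.length →
      approx (seg X i (j - i + 1)) (seg Y i (j - i + 1)))
    (hE : ∀ X Y, approx X Y ↔ (X.length = Y.length ∧
      ∀ i, 1 ≤ i → i ≤ X.length → E (X.take i) = E (Y.take i)))
    (hT : T.length = n) {a b ℓ : ℕ} (ha : 1 ≤ a) (han : a ≤ n) (hb : 1 ≤ b)
    (hbn : b ≤ n)
    (h : (codeSuffix E T n a).take ℓ = (codeSuffix E T n b).take ℓ) :
    (codeSuffix E T n (a + 1)).take (ℓ - 1) = (codeSuffix E T n (b + 1)).take (ℓ - 1) := by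
  rcases eq_or_ne a b with rfl | hab
  · rfl
  obtain hℓ | hℓ := Nat.lt_or_ge ℓ 2
  · rw [show ℓ - 1 = 0 by omega, List.take_zero, List.take_zero]
  have hℓab : ℓ ≤ n + 1 - a ∧ ℓ ≤ n + 1 - b := by
    rcases Nat.lt_or_gt_of_ne hab with hlt | hgt
    · have := le_of_take_codeSuffix_eq hlt (by omega) h
      omega
    · have := le_of_take_codeSuffix_eq hgt (by omega) h.symm
      omega
  have happrox := (take_codeSuffix_eq_iff_approx hE hT ha hb (by omega) (by omega)).mp h
  have hshift := hsub _ _ happrox 2 ℓ one_le_two hℓ (length_seg hT ha (by omega)).ge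
  rw [show ℓ - 2 + 1 = ℓ - 1 by omega, seg_seg_two T ha, seg_seg_two T hb] at hshift
  exact (take_codeSuffix_eq_iff_approx hE hT (by omega) (by omega) (by omega) (by omega)).mpr
    hshift

end codeSuffix

theorem code_suffixes_form_quasi_suffix_collection_general
    (approx : List ℤ → List ℤ → Prop)
    (hsub : ∀ X Y, approx X Y → ∀ i j, 1 ≤ i → i ≤ j → j ≤ X.length →
      approx (seg X i (j - i + 1)) (seg Y i (j - i + 1)))
    (E : List ℤ → ℤ)
    (hE : ∀ X Y, approx X Y ↔ (X.length = Y.length ∧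
      ∀ i, 1 ≤ i → i ≤ X.length → E (X.take i) = E (Y.take i)))
    (T : List ℤ) (n : ℕ) (hT : T.length = n) :
    let S : ℕ → List (Option ℤ) := fun i =>
      ((List.range (n + 1 - i)).map (fun t => some (E (seg T i (t + 1))))) ++ [none]
    ((S 1).length = n + 1) ∧
    (∀ i ∈ Finset.Icc 2 (n + 1), (S i).length = (S (i - 1)).length - 1) ∧
    (∀ i ∈ Finset.Icc 1 (n + 1), ∀ j ∈ Finset.Icc 1 (n + 1), i ≠ j →
      ¬ (S i <+: S j)) ∧
    (∀ i ∈ Finset.Icc 1 n, ∀ j ∈ Finset.Icc 1 n, ∀ ℓ, 1 ≤ ℓ →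
      (S i).take ℓ = (S j).take ℓ →
      (S (i + 1)).take (ℓ - 1) = (S (j + 1)).take (ℓ - 1)) := by
  intro S
  rw [show S = codeSuffix E T n from rfl]
  refine ⟨?_, fun i hi => ?_, fun i hi j hj hij hpre => ?_, fun a ha b hb ℓ _ h => ?_⟩
  · rw [length_codeSuffix]
    omega
  · rw [Finset.mem_Icc] at hi
    rw [length_codeSuffix, length_codeSuffix]
    omega
  · rw [Finset.mem_Icc] at hi hj
    exact hij (eq_of_codeSuffix_prefix hi.2 hj.2 hpre)
  · rw [Finset.mem_Icc] at ha hb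
    exact take_codeSuffix_succ_eq hsub hE hT ha.1 ha.2 hb.1 hb.2 h

/-- for an SCER with encoding function E, the strings
S_i = Code(T[i..n])·# (for i ∈ [1..n+1]), where Code(X) is the list of
encodings of all nonempty prefixes of X and # is a fresh end-marker,
form a quasi-suffix collection. -/
theorem code_suffixes_form_quasi_suffix_collection
    (approx : List ℤ → List ℤ → Prop)
    (hequiv : Equivalence approx)
    (hlen : ∀ X Y, approx X Y → X.length = Y.length)
    (hsub : ∀ X Y, approx X Y → ∀ i j, 1 ≤ i → i ≤ j → j ≤ X.length →
      approx (seg X i (j - i + 1)) (seg Y i (j - i + 1)))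
    (E : List ℤ → ℤ)
    (hE : ∀ X Y, approx X Y ↔ (X.length = Y.length ∧
      ∀ i, 1 ≤ i → i ≤ X.length → E (X.take i) = E (Y.take i)))
    (T : List ℤ) (n : ℕ) (hT : T.length = n) :
    let S : ℕ → List (Option ℤ) := fun i =>
      ((List.range (n + 1 - i)).map (fun t => some (E (seg T i (t + 1))))) ++ [none]
    ((S 1).length = n + 1) ∧
    (∀ i ∈ Finset.Icc 2 (n + 1), (S i).length = (S (i - 1)).length - 1) ∧
    (∀ i ∈ Finset.Icc 1 (n + 1), ∀ j ∈ Finset.Icc 1 (n + 1), i ≠ j →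
      ¬ (S i <+: S j)) ∧
    (∀ i ∈ Finset.Icc 1 n, ∀ j ∈ Finset.Icc 1 n, ∀ ℓ, 1 ≤ ℓ →
      (S i).take ℓ = (S j).take ℓ →
      (S (i + 1)).take (ℓ - 1) = (S (j + 1)).take (ℓ - 1)) :=
  code_suffixes_form_quasi_suffix_collection_general approx hsub E hE T n hT
end
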